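/- If a switching flow x exists for (G, o, d), then the run terminates and its run profile x(G,o,d) satisfies x(G,o,d)(e) ≤ x(e) for every edge e (the run profile is a componentwise lower bound for every switching flow). -/

import Mathlib

open scoped Classical

/-- A switch graph: every vertex has an even successor `s0 v` and an odd successor `s1 v`. -/
structure SwitchGraph (V : Type) where
  s0 : V → V
  s1 : V → V

namespace SwitchGraph

variable {V : Type}

/-- The successor of `v` along the edge of parity `b` (`false` = even, `true` = odd). -/
def succ (G : SwitchGraph V) (v : V) (b : Bool) : V :=
  if b then G.s1 v else G.s0 v

/-- One step of the run: move to the currently active successor and flip the switch. -/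
def step [DecidableEq V] (G : SwitchGraph V) (p : V × (V → Bool)) : V × (V → Bool) :=
  (G.succ p.1 (p.2 p.1), Function.update p.2 p.1 (!p.2 p.1))

/-- The state of the run after `n` steps, starting at `o` with all switches even,
stopping (freezing) upon reaching `d`. -/
def run [DecidableEq V] (G : SwitchGraph V) (o d : V) (n : ℕ) : V × (V → Bool) :=
  (fun p => if p.1 = d then p else G.step p)^[n] (o, fun _ => false)

/-- The run from `o` terminates at `d`. -/
def Terminates [DecidableEq V] (G : SwitchGraph V) (o d : V) : Prop :=
  ∃ n, (G.run o d n).1 = d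

/-- Number of traversals of the outgoing edge of `v` of parity `b` during
the first `N` steps of the run. -/
def traversals [DecidableEq V] (G : SwitchGraph V) (o d : V) (N : ℕ) (v : V) (b : Bool) : ℕ :=
  ((Finset.range N).filter
    (fun n => (G.run o d n).1 = v ∧ v ≠ d ∧ (G.run o d n).2 v = b)).card

/-- Total weight on edges leaving `v`. -/
def outflow {M : Type} [AddCommMonoid M] (x : V → Bool → M) (v : V) : M :=
  x v false + x v true

/-- Total weight on edges entering `v`. -/
def inflow [Fintype V] [DecidableEq V] (G : SwitchGraph V) {M : Type} [AddCommMonoid M]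
    (x : V → Bool → M) (v : V) : M :=
  ∑ u : V, ∑ b : Bool, if G.succ u b = v then x u b else 0

/-- A switching flow: flow conservation of value 1 from `o` to `d`, together with the
balancing condition `x v true ≤ x v false ≤ x v true + 1` at every vertex. -/
def IsSwitchingFlow [Fintype V] [DecidableEq V] (G : SwitchGraph V) (o d : V)
    (x : V → Bool → ℕ) : Prop :=
  (∀ v, outflow x v + (if v = d then 1 else 0) = G.inflow x v + (if v = o then 1 else 0)) ∧
  (∀ v, x v true ≤ x v false ∧ x v false ≤ x v true + 1)

/-- The edge relation of the underlying directed graph `(V, E)`. -/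
def stepRel (G : SwitchGraph V) (a b : V) : Prop :=
  G.s0 a = b ∨ G.s1 a = b

/-- A dead end: a vertex with no directed path to `d` in `(V, E)`. -/
def DeadEnd (G : SwitchGraph V) (d w : V) : Prop :=
  ¬ Relation.ReflTransGen G.stepRel w d

/-- There is a directed walk of length `k` from `w` to `d` in `(V, E)`. -/
def Chain (G : SwitchGraph V) (w d : V) (k : ℕ) : Prop :=
  ∃ f : ℕ → V, f 0 = w ∧ f k = d ∧ ∀ i < k, G.stepRel (f i) (f (i + 1))

end SwitchGraph

open SwitchGraph

/-!
Up to any step `N`, the run profile obeys flow conservation at every `v ≠ d` except for one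
unit at the current position, and the switch of `v` is odd exactly when `v` has been left once
more along its even edge than along its odd one. By induction on `N` the profile stays below
any switching flow `x`: when the run leaves `v ≠ d`, it has entered `v` at most as often as `x`
does, so by conservation it has left `v` fewer than `outflow x v` times before, and the two
balancing conditions then leave room on the active edge. Every step before reaching `d` adds one
traversal, so the run reaches `d` within `∑ x` steps.
-/

namespace SwitchGraph

open Finset

section Run

variable {V : Type} [DecidableEq V] (G : SwitchGraph V) (o d : V)

theorem run_succ (n : ℕ) :
    G.run o d (n + 1) =
      if (G.run o d n).1 = d then G.run o d n else G.step (G.run o d n) := by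
  rw [run, run, Function.iterate_succ_apply']

theorem run_succ_fst (n : ℕ) :
    (G.run o d (n + 1)).1 =
      if (G.run o d n).1 = d then d
      else G.succ (G.run o d n).1 ((G.run o d n).2 (G.run o d n).1) := by
  rw [run_succ]
  split_ifs with h <;> simp [h, step]

theorem run_succ_snd_apply (n : ℕ) (v : V) :
    (G.run o d (n + 1)).2 v =
      if (G.run o d n).1 = v ∧ v ≠ d then !(G.run o d n).2 v else (G.run o d n).2 v := by
  rw [run_succ]
  by_cases hd : (G.run o d n).1 = d
  · simp [hd, @eq_comm _ d]
  · by_cases hv : (G.run o d n).1 = v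
    · subst hv; simp [hd, step]
    · simp [hd, hv, step, Ne.symm hv]

theorem traversals_eq_sum (N : ℕ) (v : V) (b : Bool) :
    G.traversals o d N v b = ∑ n ∈ range N,
      if (G.run o d n).1 = v ∧ v ≠ d ∧ (G.run o d n).2 v = b then 1 else 0 := by
  rw [traversals, card_filter]

theorem traversals_succ (N : ℕ) (v : V) (b : Bool) :
    G.traversals o d (N + 1) v b = G.traversals o d N v b +
      if (G.run o d N).1 = v ∧ v ≠ d ∧ (G.run o d N).2 v = b then 1 else 0 := by
  simp only [traversals_eq_sum, sum_range_succ]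

theorem traversals_false_eq (N : ℕ) (v : V) :
    G.traversals o d N v false =
      G.traversals o d N v true + if (G.run o d N).2 v then 1 else 0 := by
  induction N with
  | zero => simp [traversals_eq_sum, run]
  | succ N ih =>
    rw [traversals_succ, traversals_succ, run_succ_snd_apply]
    by_cases h : (G.run o d N).1 = v ∧ v ≠ d
    · cases hs : (G.run o d N).2 v <;> simp [h, hs] at ih ⊢ <;> omega
    · simp only [← and_assoc, h, false_and, if_false, ih, add_zero]

theorem outflow_traversals (N : ℕ) {v : V} (hv : v ≠ d) :
    outflow (G.traversals o d N) v = #{n ∈ range N | (G.run o d n).1 = v} := by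
  simp only [outflow, traversals_eq_sum, ← sum_add_distrib, card_filter]
  refine sum_congr rfl fun n _ => ?_
  cases (G.run o d n).2 v <;> simp [hv]

end Run

section Profile

variable {V : Type} [Fintype V] [DecidableEq V] (G : SwitchGraph V) (o d : V)

theorem inflow_mono {M : Type} [AddCommMonoid M] [PartialOrder M] [IsOrderedAddMonoid M]
    {x y : V → Bool → M} (h : ∀ u b, x u b ≤ y u b) (v : V) :
    G.inflow x v ≤ G.inflow y v :=
  sum_le_sum fun u _ => sum_le_sum fun b _ => by split_ifs <;> simp [h]

theorem sum_sum_ite_active {M : Type} [AddCommMonoid M] (p : V) (s : V → Bool)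
    (f : V → Bool → M) :
    ∑ u, ∑ b, (if p = u ∧ u ≠ d ∧ s u = b then f u b else 0) =
      if p ≠ d then f p (s p) else 0 := by
  rw [Fintype.sum_eq_single p fun u hu => sum_eq_zero fun b _ => if_neg fun h => hu h.1.symm,
    Fintype.sum_eq_single (s p) fun b hb => if_neg fun h => hb h.2.2.symm]
  simp

theorem sum_sum_traversals (N : ℕ) :
    ∑ v, ∑ b, G.traversals o d N v b = #{n ∈ range N | (G.run o d n).1 ≠ d} := by
  simp only [traversals_eq_sum, card_filter]
  conv_lhs => arg 2; ext v; rw [sum_comm]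
  rw [sum_comm]
  exact sum_congr rfl fun n _ => sum_sum_ite_active d _ _ _

theorem inflow_traversals (N : ℕ) {v : V} (hv : v ≠ d) :
    G.inflow (G.traversals o d N) v = #{n ∈ range N | (G.run o d (n + 1)).1 = v} := by
  simp only [inflow, traversals_eq_sum, ite_sum_zero]
  conv_lhs => arg 2; ext u; rw [sum_comm]
  rw [sum_comm, card_filter]
  refine sum_congr rfl fun n _ => ?_
  let P u b := (G.run o d n).1 = u ∧ u ≠ d ∧ (G.run o d n).2 u = b
  calc _ = ∑ u, ∑ b, if P u b then (if G.succ u b = v then 1 else 0) else 0 := by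
        simp only [P, ← ite_and, and_comm]
    _ = _ := by
      rw [sum_sum_ite_active, run_succ_fst]
      split_ifs <;> simp_all

theorem outflow_add_eq_inflow_add_traversals (N : ℕ) {v : V} (hv : v ≠ d) :
    outflow (G.traversals o d N) v + (if (G.run o d N).1 = v then 1 else 0) =
      G.inflow (G.traversals o d N) v + if v = o then 1 else 0 := by
  rw [outflow_traversals G o d N hv, inflow_traversals G o d N hv, card_filter, card_filter,
    ← sum_range_succ, sum_range_succ']
  simp [run, eq_comm]

theorem traversals_le_of_isSwitchingFlow {x : V → Bool → ℕ} (hx : G.IsSwitchingFlow o d x)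
    (N : ℕ) (v : V) (b : Bool) : G.traversals o d N v b ≤ x v b := by
  induction N generalizing v b with
  | zero => simp [traversals]
  | succ N ih =>
    rw [traversals_succ]
    split_ifs with h
    · obtain ⟨hw, hv, hs⟩ := h
      have hin := G.inflow_mono ih v
      have hcons := G.outflow_add_eq_inflow_add_traversals o d N hv
      have hxcons := hx.1 v
      have hcap := hx.2 v
      have hbal := G.traversals_false_eq o d N v
      simp only [outflow, hw, hs, if_neg hv, ↓reduceIte] at hcons hxcons hbal
      cases b <;> simp only [Bool.false_eq_true, ↓reduceIte] at hbal <;> omega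
    · simpa using ih v b

theorem terminates_of_isSwitchingFlow {x : V → Bool → ℕ} (hx : G.IsSwitchingFlow o d x) :
    G.Terminates o d := by
  by_contra h
  simp only [Terminates, not_exists] at h
  have hbound : ∑ v, ∑ b, G.traversals o d (∑ v, ∑ b, x v b + 1) v b ≤ ∑ v, ∑ b, x v b :=
    sum_le_sum fun v _ => sum_le_sum fun b _ => G.traversals_le_of_isSwitchingFlow o d hx _ v b
  rw [sum_sum_traversals, filter_true_of_mem fun n _ => h n, card_range] at hbound
  omega

end Profile

end SwitchGraph

theorem stmt5_general {V : Type} [Fintype V] [DecidableEq V] (G : SwitchGraph V) (o d : V)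
    (x : V → Bool → ℕ) (hx : G.IsSwitchingFlow o d x) :
    G.Terminates o d ∧
      ∀ N, (G.run o d N).1 = d → ∀ v b, G.traversals o d N v b ≤ x v b :=
  ⟨G.terminates_of_isSwitchingFlow o d hx,
    fun N _ => G.traversals_le_of_isSwitchingFlow o d hx N⟩

/-- If a switching flow `x` exists, the run terminates and its run profile is bounded
componentwise by `x`. -/
theorem stmt5 {V : Type} [Fintype V] [DecidableEq V] (G : SwitchGraph V) (o d : V)
    (hod : o ≠ d) (x : V → Bool → ℕ) (hx : G.IsSwitchingFlow o d x) :
    G.Terminates o d ∧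
      ∀ N, (G.run o d N).1 = d → ∀ v b, G.traversals o d N v b ≤ x v b :=
  stmt5_general G o d x hx
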